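/- Fix positive integers b, c and integers a_1, a_2 with 0 < b a_2 <= a_1. The coefficients e(p,q) = [a_2 choose p]_{v^b} [a_1 - bp choose q]_{v^c} satisfy the second branch of the quantum greedy recurrence: whenever c a_1 q >= b a_2 p and (p,q) != (0,0), e(p,q) = \sum_{l=1}^{q} (-1)^{l-1} e(p, q-l) [[a_1 - bp]_+ + l - 1 choose l]_{v^c}. -/

import Mathlib

open Finset

noncomputable section

/-- Field of rational functions over ℚ, containing `ℤ[w^{±1}]`. -/
abbrev KK : Type := RatFunc ℚ

/-- The indeterminate `w`. -/
def wvar : KK := RatFunc.X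

/-- The bar-invariant quantum integer `[n]_u = (u^n - u^{-n})/(u - u⁻¹)`. -/
def qint (u : KK) (n : ℤ) : KK := (u ^ n - u ^ (-n)) / (u - u⁻¹)

/-- The bar-invariant quantum binomial coefficient. -/
def qbinom (u : KK) (n : ℤ) (k : ℕ) : KK :=
  (∏ i ∈ Finset.range k, qint u (n - i)) / (∏ i ∈ Finset.range k, qint u ((i : ℤ) + 1))

/-!
For `p ≤ a₂` we have `m = a₁ - b p ≥ 0`, so `[m]₊ = m`, and the reflection
`[m + l - 1 choose l] = (-1)^l [-m choose l]` turns the recurrence into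
`∑_{i + k = q} [-m choose i] [m choose k] = 0` for `q ≥ 1`. This is the quantum Vandermonde
convolution for `-m + m = 0`, whose weights `u^{-m (i + k)}` are constant on the antidiagonal,
together with `[0 choose q] = 0`. For `p > a₂ > 0` the factor `[a₂ choose p]` vanishes.
Vandermonde itself follows by induction on `q` from the absorption identity
`[q + 1] [N choose q + 1] = [N] [N - 1 choose q]` and `[i + k] = u^{-k} [i] + u^i [k]`.
-/

section QuantumBinomial

variable {u : KK}

lemma qint_zero : qint u 0 = 0 := by simp [qint]

lemma qint_neg (n : ℤ) : qint u (-n) = -qint u n := by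
  rw [qint, qint, neg_neg, ← neg_div, neg_sub]

lemma qint_add (hu0 : u ≠ 0) (m n : ℤ) :
    qint u (m + n) = u ^ (-n) * qint u m + u ^ m * qint u n := by
  simp only [qint, mul_div_assoc', ← add_div, mul_sub, ← zpow_add₀ hu0]
  ring_nf

lemma zpow_ne_zpow_neg {G₀ : Type*} [GroupWithZero G₀] {x : G₀} (hx0 : x ≠ 0)
    (hx : ¬IsOfFinOrder x) {k : ℕ} (hk : k ≠ 0) : x ^ (k : ℤ) ≠ x ^ (-(k : ℤ)) := by
  intro h
  refine hx (isOfFinOrder_iff_pow_eq_one.2 ⟨2 * k, by omega, ?_⟩)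
  calc x ^ (2 * k) = x ^ (k : ℤ) * x ^ (k : ℤ) := by rw [two_mul, pow_add, zpow_natCast]
    _ = x ^ (-(k : ℤ)) * x ^ (k : ℤ) := congrArg (· * x ^ (k : ℤ)) h
    _ = 1 := by rw [← zpow_add₀ hx0, neg_add_cancel, zpow_zero]

lemma qint_natCast_ne_zero (hu0 : u ≠ 0) (hu : ¬IsOfFinOrder u) {k : ℕ} (hk : k ≠ 0) :
    qint u k ≠ 0 :=
  div_ne_zero (sub_ne_zero.2 (zpow_ne_zpow_neg hu0 hu hk))
    (by simpa using sub_ne_zero.2 (zpow_ne_zpow_neg hu0 hu one_ne_zero))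

lemma qbinom_zero (n : ℤ) : qbinom u n 0 = 1 := by simp [qbinom]

lemma qbinom_succ (n : ℤ) (k : ℕ) :
    qbinom u n (k + 1) = qint u n / qint u (k + 1) * qbinom u (n - 1) k := by
  rw [qbinom, qbinom, prod_range_succ', prod_range_succ, mul_comm (qint u n / _),
    ← mul_div_mul_comm]
  simp only [Nat.cast_add, Nat.cast_one, Nat.cast_zero, sub_zero, sub_add_eq_sub_sub,
    sub_right_comm n]

lemma qbinom_eq_zero_of_lt {n : ℤ} {k : ℕ} (hn : 0 ≤ n) (hnk : n < k) : qbinom u n k = 0 := by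
  have hfactor : qint u (n - n.toNat) = 0 := by rw [Int.toNat_of_nonneg hn, sub_self, qint_zero]
  rw [qbinom, prod_eq_zero (mem_range.2 (by omega)) hfactor, zero_div]

lemma qbinom_neg (n : ℤ) (l : ℕ) : qbinom u (-n) l = (-1) ^ l * qbinom u (n + l - 1) l := by
  have hnum : ∏ i ∈ range l, qint u (-n - i) =
      (-1) ^ l * ∏ i ∈ range l, qint u (n + l - 1 - i) :=
    calc ∏ i ∈ range l, qint u (-n - i) = ∏ i ∈ range l, -1 * qint u (n + i) :=
          prod_congr rfl fun i _ => by rw [neg_one_mul, ← qint_neg, neg_add']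
      _ = (-1) ^ l * ∏ i ∈ range l, qint u (n + i) := by
          rw [prod_mul_distrib, prod_const, card_range]
      _ = (-1) ^ l * ∏ i ∈ range l, qint u (n + l - 1 - i) := by
          rw [← prod_range_reflect (fun i : ℕ => qint u (n + i))]
          refine congrArg _ (prod_congr rfl fun i hi => congrArg _ ?_)
          rw [mem_range] at hi
          omega
  rw [qbinom, qbinom, hnum, mul_div_assoc]

lemma qint_mul_qbinom_succ (hu0 : u ≠ 0) (hu : ¬IsOfFinOrder u) (n : ℤ) (k : ℕ) :
    qint u (k + 1) * qbinom u n (k + 1) = qint u n * qbinom u (n - 1) k := by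
  have hk : qint u (k + 1) ≠ 0 := by exact_mod_cast qint_natCast_ne_zero hu0 hu k.succ_ne_zero
  rw [qbinom_succ, ← mul_assoc, mul_div_cancel₀ _ hk]

/-- The quantum Vandermonde convolution. -/
theorem qbinom_add_eq_sum_antidiagonal (hu0 : u ≠ 0) (hu : ¬IsOfFinOrder u) (m n : ℤ)
    (q : ℕ) :
    qbinom u (m + n) q =
      ∑ x ∈ antidiagonal q, u ^ (m * x.2 - n * x.1) * qbinom u m x.1 * qbinom u n x.2 := by
  induction q generalizing m n with
  | zero => simp [qbinom_zero]
  | succ q ih =>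
    have hq : qint u (q + 1) ≠ 0 := by
      exact_mod_cast qint_natCast_ne_zero hu0 hu q.succ_ne_zero
    refine mul_left_cancel₀ hq ?_
    have hzpow {a b c d : ℤ} (h : a + b = c + d) : u ^ a * u ^ b = u ^ c * u ^ d := by
      rw [← zpow_add₀ hu0, ← zpow_add₀ hu0, h]
    have hsplit : ∀ x ∈ antidiagonal (q + 1),
        qint u (q + 1) = u ^ (-(x.2 : ℤ)) * qint u x.1 + u ^ (x.1 : ℤ) * qint u x.2 := by
      intro x hx
      rw [HasAntidiagonal.mem_antidiagonal] at hx
      rw [show ((q : ℤ) + 1) = x.1 + x.2 by omega, qint_add hu0]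
    have hlhs : qint u (q + 1) * qbinom u (m + n) (q + 1) =
        u ^ (-n) * qint u m * qbinom u (m - 1 + n) q
          + u ^ m * qint u n * qbinom u (m + (n - 1)) q := by
      rw [qint_mul_qbinom_succ hu0 hu, qint_add hu0, sub_add_eq_add_sub, add_sub_assoc]
      ring
    conv_rhs => rw [mul_sum, sum_congr rfl fun x hx => by rw [hsplit x hx, add_mul]]
    rw [hlhs, ih, ih, mul_sum, mul_sum, sum_add_distrib, Nat.sum_antidiagonal_succ,
      Nat.sum_antidiagonal_succ']
    simp only [Nat.cast_add, Nat.cast_one, Nat.cast_zero, qint_zero, mul_zero, zero_mul, zero_add]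
    congr 1 <;> refine sum_congr rfl fun x _ => ?_
    · have habsorb := qint_mul_qbinom_succ hu0 hu m x.1
      have hexp := hzpow (a := -n) (b := (m - 1) * x.2 - n * x.1) (c := -x.2)
        (d := m * x.2 - n * (x.1 + 1)) (by ring)
      linear_combination (qint u m * qbinom u (m - 1) x.1 * qbinom u n x.2) * hexp
        - u ^ (-(x.2 : ℤ)) * u ^ (m * x.2 - n * (x.1 + 1)) * qbinom u n x.2 * habsorb
    · have habsorb := qint_mul_qbinom_succ hu0 hu n x.2
      have hexp := hzpow (a := m) (b := m * x.2 - (n - 1) * x.1) (c := x.1)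
        (d := m * (x.2 + 1) - n * x.1) (by ring)
      linear_combination (qint u n * qbinom u m x.1 * qbinom u (n - 1) x.2) * hexp
        - u ^ (x.1 : ℤ) * u ^ (m * (x.2 + 1) - n * x.1) * qbinom u m x.1 * habsorb

lemma sum_antidiagonal_qbinom_neg_mul_qbinom (hu0 : u ≠ 0) (hu : ¬IsOfFinOrder u) (m : ℤ)
    {q : ℕ} (hq : q ≠ 0) :
    ∑ x ∈ antidiagonal q, qbinom u (-m) x.1 * qbinom u m x.2 = 0 := by
  have h := qbinom_add_eq_sum_antidiagonal hu0 hu (-m) m q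
  rw [neg_add_cancel, qbinom_eq_zero_of_lt le_rfl (by omega)] at h
  have hweight : ∑ x ∈ antidiagonal q,
      u ^ (-m * x.2 - m * x.1) * qbinom u (-m) x.1 * qbinom u m x.2 =
        u ^ (-m * q) * ∑ x ∈ antidiagonal q, qbinom u (-m) x.1 * qbinom u m x.2 := by
    rw [mul_sum]
    refine sum_congr rfl fun x hx => ?_
    rw [HasAntidiagonal.mem_antidiagonal] at hx
    rw [show -m * (x.2 : ℤ) - m * x.1 = -m * q by rw [← hx]; push_cast; ring]
    ring
  rw [hweight] at h
  exact (mul_eq_zero.1 h.symm).resolve_left (zpow_ne_zero _ hu0)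

lemma qbinom_eq_sum_Icc_neg_one_pow (hu0 : u ≠ 0) (hu : ¬IsOfFinOrder u) (m : ℤ) {q : ℕ}
    (hq : q ≠ 0) :
    qbinom u m q =
      ∑ l ∈ Icc 1 q, (-1) ^ (l - 1) * qbinom u m (q - l) * qbinom u (m + l - 1) l := by
  have h := sum_antidiagonal_qbinom_neg_mul_qbinom hu0 hu m hq
  rw [Nat.sum_antidiagonal_eq_sum_range_succ (fun i k => qbinom u (-m) i * qbinom u m k),
    range_eq_Ico, sum_eq_sum_Ico_succ_bot q.succ_pos, zero_add, Nat.succ_eq_add_one,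
    Ico_add_one_right_eq_Icc] at h
  simp only [qbinom_zero, Nat.sub_zero, one_mul] at h
  rw [eq_neg_of_add_eq_zero_left h, ← sum_neg_distrib]
  refine sum_congr rfl fun l hl => ?_
  rw [qbinom_neg, ← pow_sub_one_mul (by grind : l ≠ 0)]
  ring

end QuantumBinomial

lemma not_isOfFinOrder_wvar : ¬IsOfFinOrder wvar := by
  have hinj : Function.Injective (algebraMap (Polynomial ℚ) KK : Polynomial ℚ →* KK) :=
    RatFunc.algebraMap_injective ℚ
  rw [wvar, ← RatFunc.algebraMap_X]
  intro h
  obtain ⟨n, hn, hXn⟩ := isOfFinOrder_iff_pow_eq_one.1 ((hinj.isOfFinOrder_iff (x := .X)).1 h)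
  simpa [hn.ne'] using congrArg Polynomial.natDegree hXn

theorem greedy_case4_second_branch_general (b c : ℕ) (hc : 0 < c) (a1 a2 : ℤ)
    (hpos : 0 < b * a2) (hle : b * a2 ≤ a1) :
    ∀ p q : ℕ, (p, q) ≠ (0, 0) → (b : ℤ) * a2 * p ≤ (c : ℤ) * a1 * q →
      qbinom (wvar ^ b) a2 p * qbinom (wvar ^ c) (a1 - b * p) q =
        ∑ l ∈ Finset.Icc 1 q, (-1 : KK) ^ (l - 1) *
          (qbinom (wvar ^ b) a2 p * qbinom (wvar ^ c) (a1 - b * p) (q - l)) *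
          qbinom (wvar ^ c) (max (a1 - b * p) 0 + (l : ℤ) - 1) l := by
  intro p q hpq hineq
  have hu0 : (wvar ^ c : KK) ≠ 0 := pow_ne_zero _ RatFunc.X_ne_zero
  have hu : ¬IsOfFinOrder (wvar ^ c) := by simp [not_isOfFinOrder_wvar, hc.ne']
  have ha2 : 0 < a2 := pos_of_mul_pos_right hpos (Int.natCast_nonneg b)
  have hq : q ≠ 0 := by
    rintro rfl
    have hp : 0 < (p : ℤ) := Nat.cast_pos.2 (Nat.pos_of_ne_zero (by simpa using hpq))
    simp only [Nat.cast_zero, mul_zero] at hineq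
    exact hineq.not_gt (mul_pos hpos hp)
  rcases le_or_gt (p : ℤ) a2 with hp | hp
  · have hm : 0 ≤ a1 - b * p := by nlinarith
    rw [max_eq_left hm, qbinom_eq_sum_Icc_neg_one_pow hu0 hu _ hq, mul_sum]
    exact sum_congr rfl fun l _ => by ring
  · simp [qbinom_eq_zero_of_lt ha2.le hp]

/-- In case `0 < b a_2 ≤ a_1`, the coefficients
`e(p,q) = [a_2 choose p]_{v^b} [a_1 - bp choose q]_{v^c}` satisfy the second branch
of the quantum greedy recurrence. -/
theorem greedy_case4_second_branch (b c : ℕ) (hb : 0 < b) (hc : 0 < c) (a1 a2 : ℤ)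
    (hpos : 0 < b * a2) (hle : b * a2 ≤ a1) :
    ∀ p q : ℕ, (p, q) ≠ (0, 0) → (b : ℤ) * a2 * p ≤ (c : ℤ) * a1 * q →
      qbinom (wvar ^ b) a2 p * qbinom (wvar ^ c) (a1 - b * p) q =
        ∑ l ∈ Finset.Icc 1 q, (-1 : KK) ^ (l - 1) *
          (qbinom (wvar ^ b) a2 p * qbinom (wvar ^ c) (a1 - b * p) (q - l)) *
          qbinom (wvar ^ c) (max (a1 - b * p) 0 + (l : ℤ) - 1) l :=
  greedy_case4_second_branch_general b c hc a1 a2 hpos hle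

end
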